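/- Let α_n, β_n ∈ (0,1) be sequences with β_n ≤ α_n, β_n bounded away from 1 (say β_n ≤ 1 − c for a constant c > 0), and (α_n − β_n)/β_n → 0 as n → ∞. Then −2·log( 1 − d_H(α_n, β_n)² ) = (√α_n − √β_n)² · ( (√α_n + √β_n)² / (4·β_n·(1−β_n)) + o(1) ) as n → ∞; in particular, 1 − d_H(α_n, β_n)² = 1 − (α_n − β_n)²/(8·β_n·(1−β_n)) + o( (α_n − β_n)²/(β_n(1−β_n)) ). -/

import Mathlib

open Filter Finset Asymptotics
open scoped Classical

noncomputable section

namespace Paper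

/-- Squared Hellinger distance between `Bernoulli x` and `Bernoulli y`. -/
def hellSq (x y : ℝ) : ℝ :=
  ((Real.sqrt x - Real.sqrt y) ^ 2 + (Real.sqrt (1 - x) - Real.sqrt (1 - y)) ^ 2) / 2

/-- Squared minimum Hellinger distance among the latent preference levels. -/
def dHminSq {d : ℕ} (lvl : Fin d → ℝ) : ℝ :=
  sInf {h : ℝ | ∃ i j : Fin d, i ≠ j ∧ h = hellSq (lvl i) (lvl j)}

/-- Graph information quantity `I_s = -2 log(1 - d_H(α,β)^2)`. -/
def Is (α β : ℝ) : ℝ := -2 * Real.log (1 - hellSq α β)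

/-- Observed rating matrices: `none` = unobserved (0), `some true` = +1, `some false` = −1. -/
abbrev RatingMatrix (N M : ℕ) := Fin N → Fin M → Option Bool

/-- Observed graphs on `N` users: an edge indicator on each unordered pair `(i, j)`, `i < j`. -/
abbrev ObsGraph (N : ℕ) := {e : Fin N × Fin N // e.1 < e.2} → Bool

/-- Likelihood of one rating entry. -/
def entryProb (p r : ℝ) : Option Bool → ℝ
  | none => 1 - p
  | some true => p * r
  | some false => p * (1 - r)

/-- Likelihood of an observed rating matrix given the latent preference matrix `R`. -/
def ratingLik {N M : ℕ} (p : ℝ) (R : Fin N → Fin M → ℝ) (Nm : RatingMatrix N M) : ℝ :=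
  ∏ i, ∏ j, entryProb p (R i j) (Nm i j)

/-- Likelihood of an observed graph under the symmetric SBM with cluster assignment `σ`. -/
def graphLik {N : ℕ} {κ : Type} [DecidableEq κ] (α β : ℝ) (σ : Fin N → κ)
    (g : ObsGraph N) : ℝ :=
  ∏ e : {e : Fin N × Fin N // e.1 < e.2},
    if σ e.1.1 = σ e.1.2 then (if g e then α else 1 - α) else (if g e then β else 1 - β)

/-- Joint likelihood of `(N^Ω, G)`. -/
def outcomeProb {N M : ℕ} {κ : Type} [DecidableEq κ] (p α β : ℝ)
    (R : Fin N → Fin M → ℝ) (σ : Fin N → κ) (Nm : RatingMatrix N M) (g : ObsGraph N) : ℝ :=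
  ratingLik p R Nm * graphLik α β σ g

/-- Probability of an event of `(N^Ω, G)` under the model `(R, σ, p, α, β)`. -/
def prEvent {N M : ℕ} {κ : Type} [DecidableEq κ] (p α β : ℝ)
    (R : Fin N → Fin M → ℝ) (σ : Fin N → κ)
    (S : RatingMatrix N M → ObsGraph N → Prop) : ℝ :=
  ∑ Nm : RatingMatrix N M, ∑ g : ObsGraph N, if S Nm g then outcomeProb p α β R σ Nm g else 0

/-- Probability of an event of the graph `G` alone. -/
def grPrEvent {N : ℕ} {κ : Type} [DecidableEq κ] (α β : ℝ) (σ : Fin N → κ)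
    (S : ObsGraph N → Prop) : ℝ :=
  ∑ g : ObsGraph N, if S g then graphLik α β σ g else 0

/-- Probability of an event of the rating matrix `N^Ω` alone. -/
def prRating {N M : ℕ} (p : ℝ) (R : Fin N → Fin M → ℝ)
    (S : RatingMatrix N M → Prop) : ℝ :=
  ∑ Nm : RatingMatrix N M, if S Nm then ratingLik p R Nm else 0

/-- Probability of a joint event of the rating matrix `N^Ω` and `m₀` column indices
sampled uniformly at random from `[M]` with replacement, independently of `N^Ω`. -/
def prRatingSample {N M m₀ : ℕ} (p : ℝ) (R : Fin N → Fin M → ℝ)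
    (S : RatingMatrix N M → (Fin m₀ → Fin M) → Prop) : ℝ :=
  ∑ Nm : RatingMatrix N M, ∑ s : Fin m₀ → Fin M,
    if S Nm s then ratingLik p R Nm * (1 / (M : ℝ)) ^ m₀ else 0

/-- Hamming distance between two vectors. -/
def hamming {M : ℕ} {X : Type*} (u v : Fin M → X) : ℕ :=
  (Finset.univ.filter fun j => u j ≠ v j).card

/-- Bernoulli weight. -/
def bern (q : ℝ) (b : Bool) : ℝ := if b then q else 1 - q

/-- Real-valued indicator of a Boolean. -/
def bInd (b : Bool) : ℝ := if b then 1 else 0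

/-- Adjacency of `i` and `i'` in an observed graph. -/
def adjB {N : ℕ} (g : ObsGraph N) (i i' : Fin N) : Bool :=
  if h : i < i' then g ⟨(i, i'), h⟩ else if h' : i' < i then g ⟨(i', i), h'⟩ else false

/-- `e({i}, A)`: number of edges between user `i` and the user set `A`. -/
def eCount {N : ℕ} (g : ObsGraph N) (i : Fin N) (A : Finset (Fin N)) : ℕ :=
  (A.filter fun i' => adjB g i i' = true).card

/-- The local likelihood-difference statistic `L(i; A, B)`,
where `A = {i | c i = true}` and `B = {i | c i = false}`. -/
def Lstat {N M : ℕ} (α β : ℝ) (uvec vvec : Fin M → ℝ)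
    (Nm : RatingMatrix N M) (g : ObsGraph N) (c : Fin N → Bool) (i : Fin N) : ℝ :=
  Real.log (α * (1 - β) / ((1 - α) * β)) *
      ((eCount g i (Finset.univ.filter fun i' => c i' = false) : ℝ)
        - (eCount g i (Finset.univ.filter fun i' => c i' = true) : ℝ))
    + ∑ j, (if Nm i j = some true then Real.log (vvec j / uvec j) else 0)
    + ∑ j, (if Nm i j = some false then Real.log ((1 - vvec j) / (1 - uvec j)) else 0)

/-- Size of the `k`-th cluster. -/
def clusterSize {n K : ℕ} (C : Fin n → Fin K) (k : Fin K) : ℕ :=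
  (Finset.univ.filter fun i => C i = k).card

/-- Worst-case error probability `P_e^γ(ψ)` for the two equal-sized cluster model
with `2 * n'` users. -/
def worstErr (n' M : ℕ) (p α β : ℝ) {d : ℕ} (lvl : Fin d → ℝ) (γ : ℝ)
    (ψ : RatingMatrix (2 * n') M → ObsGraph (2 * n') → Fin (2 * n') → Fin M → ℝ) : ℝ :=
  sSup {e : ℝ | ∃ (σ : Fin (2 * n') → Bool) (u v : Fin M → Fin d),
    (Finset.univ.filter fun i => σ i = true).card = n' ∧
    hamming (fun j => lvl (u j)) (fun j => lvl (v j)) = ⌈γ * (M : ℝ)⌉₊ ∧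
    e = prEvent p α β (fun i j => lvl (if σ i then u j else v j)) σ
      (fun Nm g => ψ Nm g ≠ fun i j => lvl (if σ i then u j else v j))}

end Paper

open Paper
open Real Topology

/-!
Put `t = (a - b) / b` and `d = (b - a) / (1 - b)`, so that `b t + (1 - b) d = 0` and
`1 - d_H(a, b)² = b √(1 + t) + (1 - b) √(1 + d)`. The second-order Taylor polynomials of the two
square roots then add up to `1 - χ² / 8`, where `χ² = (a - b)² / (b (1 - b))`, and the cubic
remainders give `|d_H² - χ² / 8| ≤ δ χ² / 2` with `δ = |a - b| / (b (1 - b)) ≤ |a - b| / (c b) → 0`.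
This is the second expansion; with `-log (1 - x) = x + O(x²)` it also gives
`-2 log (1 - d_H²) = χ² / 4 + o(χ²)`. Finally `(√a - √b)² (√a + √b)² = (a - b)²` and
`(√a + √b)² ≤ 6 b` once `a ≤ 2 b`, so `χ² = O((√a - √b)²)` and the error is `o((√a - √b)²)`.
-/

namespace Paper

/-- The χ²-divergence of `Bernoulli a` from `Bernoulli b`. -/
def bernChiSq (a b : ℝ) : ℝ := (a - b) ^ 2 / (b * (1 - b))

lemma bernChiSq_nonneg {a b : ℝ} (hb : b ∈ Set.Icc 0 1) : 0 ≤ bernChiSq a b :=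
  div_nonneg (sq_nonneg _) (mul_nonneg hb.1 (sub_nonneg.2 hb.2))

lemma hellSq_self (x : ℝ) : hellSq x x = 0 := by simp [hellSq]

lemma one_sub_hellSq {x y : ℝ} (hx : x ∈ Set.Icc 0 1) (hy : y ∈ Set.Icc 0 1) :
    1 - hellSq x y = √(x * y) + √((1 - x) * (1 - y)) := by
  have hx' : 0 ≤ 1 - x := by linarith [hx.2]
  rw [hellSq, sqrt_mul hx.1, sqrt_mul hx']
  linear_combination (sq_sqrt hx.1 + sq_sqrt hy.1 + sq_sqrt hx' + sq_sqrt (sub_nonneg.2 hy.2)) / -2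

lemma abs_sqrt_one_add_sub_le {u : ℝ} (hu : -1 ≤ u) :
    |√(1 + u) - (1 + u / 2 - u ^ 2 / 8)| ≤ |u| ^ 3 / 2 := by
  set s := √(1 + u)
  have hs : 0 ≤ s := sqrt_nonneg _
  have hu : u = (s - 1) * (s + 1) := by
    linear_combination -(sq_sqrt (by linarith : (0 : ℝ) ≤ 1 + u))
  have hs3 : s + 3 ≤ 4 * (s + 1) ^ 3 := by nlinarith [pow_nonneg hs 3]
  calc |s - (1 + u / 2 - u ^ 2 / 8)| = |s - 1| ^ 3 * (s + 3) / 8 := by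
        rw [hu, ← abs_pow, show s + 3 = |s + 3| from (abs_of_nonneg (by linarith)).symm,
          ← abs_mul, show (8 : ℝ) = |8| by norm_num, ← abs_div]
        congr 1
        ring
    _ ≤ |s - 1| ^ 3 * (4 * (s + 1) ^ 3) / 8 := by gcongr
    _ = |u| ^ 3 / 2 := by
        rw [hu, abs_mul, abs_of_nonneg (by linarith : 0 ≤ s + 1)]
        ring

lemma abs_log_one_sub_add_le {x : ℝ} (hx : |x| ≤ 1 / 2) : |log (1 - x) + x| ≤ 2 * x ^ 2 := by
  have h := abs_log_sub_add_sum_range_le (by linarith : |x| < 1) 1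
  simp only [Finset.range_one, Finset.sum_singleton, zero_add, pow_one, Nat.cast_zero,
    div_one] at h
  calc |log (1 - x) + x| = |x + log (1 - x)| := by rw [add_comm]
    _ ≤ |x| ^ 2 / (1 - |x|) := h
    _ ≤ |x| ^ 2 / (1 / 2) := by gcongr; linarith
    _ = 2 * x ^ 2 := by rw [sq_abs]; ring

lemma abs_hellSq_sub_bernChiSq_le {a b : ℝ} (ha : a ∈ Set.Icc 0 1) (hb : b ∈ Set.Ioo 0 1) :
    |hellSq a b - bernChiSq a b / 8| ≤ |(a - b) / (b * (1 - b))| * bernChiSq a b / 2 := by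
  obtain ⟨hb0, hb1⟩ := hb
  have hb1' : 0 < 1 - b := by linarith
  set t := (a - b) / b with ht
  set d := (b - a) / (1 - b) with hd
  have hat : a * b = b ^ 2 * (1 + t) := by rw [ht]; field_simp; ring
  have had : (1 - a) * (1 - b) = (1 - b) ^ 2 * (1 + d) := by rw [hd]; field_simp; ring
  have hRt := abs_sqrt_one_add_sub_le (u := t) (by rw [ht, le_div_iff₀ hb0]; linarith [ha.1])
  have hRd := abs_sqrt_one_add_sub_le (u := d) (by rw [hd, le_div_iff₀ hb1']; linarith [ha.2])
  have hsplit : hellSq a b - bernChiSq a b / 8 =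
      -(b * (√(1 + t) - (1 + t / 2 - t ^ 2 / 8)) +
        (1 - b) * (√(1 + d) - (1 + d / 2 - d ^ 2 / 8))) := by
    rw [← sub_sub_cancel 1 (hellSq a b), one_sub_hellSq ha ⟨hb0.le, hb1.le⟩, hat, had,
      sqrt_mul (sq_nonneg _), sqrt_mul (sq_nonneg _), sqrt_sq hb0.le, sqrt_sq hb1'.le,
      bernChiSq, ht, hd]
    field_simp
    ring
  have hcube : b * |t| ^ 3 + (1 - b) * |d| ^ 3 ≤ |(a - b) / (b * (1 - b))| * bernChiSq a b := by
    calc b * |t| ^ 3 + (1 - b) * |d| ^ 3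
        = |a - b| ^ 3 * ((1 - b) ^ 2 + b ^ 2) / (b * (1 - b)) ^ 2 := by
          rw [ht, hd, abs_div, abs_div, abs_of_pos hb0, abs_of_pos hb1', abs_sub_comm b a]
          field_simp
      _ ≤ |a - b| ^ 3 * 1 / (b * (1 - b)) ^ 2 := by gcongr; nlinarith
      _ = |(a - b) / (b * (1 - b))| * bernChiSq a b := by
          rw [bernChiSq, abs_div, abs_of_pos (mul_pos hb0 hb1'), ← sq_abs (a - b)]
          field_simp
  calc |hellSq a b - bernChiSq a b / 8|
      ≤ b * (|t| ^ 3 / 2) + (1 - b) * (|d| ^ 3 / 2) := by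
        rw [hsplit, abs_neg]
        refine (abs_add_le _ _).trans ?_
        rw [abs_mul, abs_mul, abs_of_pos hb0, abs_of_pos hb1']
        gcongr
    _ ≤ |(a - b) / (b * (1 - b))| * bernChiSq a b / 2 := by linarith

lemma abs_neg_two_mul_log_one_sub_hellSq_sub_bernChiSq_le {a b : ℝ} (ha : a ∈ Set.Icc 0 1)
    (hb : b ∈ Set.Ioo 0 1) (hδ : |(a - b) / (b * (1 - b))| ≤ 1 / 2) :
    |-2 * log (1 - hellSq a b) - bernChiSq a b / 4| ≤
      2 * (|(a - b) / (b * (1 - b))| * bernChiSq a b) := by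
  set δ := (a - b) / (b * (1 - b)) with hδ_def
  set χ := bernChiSq a b
  set H := hellSq a b
  have hv : 0 < b * (1 - b) := mul_pos hb.1 (by linarith [hb.2])
  have hχ0 : 0 ≤ χ := bernChiSq_nonneg (Set.Ioo_subset_Icc_self hb)
  have hχδ : χ ≤ |δ| := by
    have hχ_eq : χ = |a - b| * |δ| := by
      rw [hδ_def, abs_div, abs_of_pos hv, ← mul_div_assoc, ← sq, sq_abs]; rfl
    rw [hχ_eq]
    exact mul_le_of_le_one_left (abs_nonneg _)
      (abs_sub_le_iff.2 ⟨by linarith [ha.2, hb.1], by linarith [ha.1, hb.2]⟩)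
  have hHχ := abs_hellSq_sub_bernChiSq_le ha hb
  have hH : |H| ≤ 3 / 8 * χ := by
    have : |δ| * χ / 2 ≤ χ / 4 := by nlinarith
    obtain ⟨hH_ge, hH_le⟩ := abs_le.1 hHχ
    exact abs_le.2 ⟨by linarith, by linarith⟩
  have hlog := abs_log_one_sub_add_le (x := H) (by linarith)
  have hH2 : H ^ 2 ≤ 9 / 64 * (|δ| * χ) := by
    rw [← sq_abs]
    calc |H| ^ 2 ≤ (3 / 8 * χ) ^ 2 := by gcongr
      _ ≤ 9 / 64 * (|δ| * χ) := by nlinarith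
  calc |-2 * log (1 - H) - χ / 4| = |-2 * (log (1 - H) + H) + 2 * (H - χ / 8)| := by ring_nf
    _ ≤ 2 * (2 * H ^ 2) + 2 * (|δ| * χ / 2) := by
        refine (abs_add_le _ _).trans ?_
        rw [abs_mul, abs_mul, abs_neg, abs_two]
        gcongr
    _ ≤ 2 * (|δ| * χ) := by nlinarith [abs_nonneg δ]

lemma sq_sqrt_sub_mul_sq_sqrt_add {a b : ℝ} (ha : 0 ≤ a) (hb : 0 ≤ b) :
    (√a - √b) ^ 2 * (√a + √b) ^ 2 = (a - b) ^ 2 := by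
  rw [← mul_pow]
  congr 1
  linear_combination sq_sqrt ha - sq_sqrt hb

lemma bernChiSq_le_mul_sq_sqrt_sub {a b : ℝ} (ha : 0 ≤ a) (hab : a ≤ 2 * b)
    (hb : b ∈ Set.Ioo 0 1) : bernChiSq a b ≤ 6 / (1 - b) * (√a - √b) ^ 2 := by
  obtain ⟨hb0, hb1⟩ := hb
  have hb1' : 0 < 1 - b := by linarith
  have hsum : (√a + √b) ^ 2 ≤ 6 * b := by
    nlinarith [sq_sqrt ha, sq_sqrt hb0.le, sq_nonneg (√a - √b)]
  calc bernChiSq a b = (√a - √b) ^ 2 * (√a + √b) ^ 2 / (b * (1 - b)) := by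
        rw [bernChiSq, sq_sqrt_sub_mul_sq_sqrt_add ha hb0.le]
    _ ≤ (√a - √b) ^ 2 * (6 * b) / (b * (1 - b)) := by gcongr
    _ = 6 / (1 - b) * (√a - √b) ^ 2 := by field_simp

section Asymptotics

variable {ι : Type*} {l : Filter ι}

lemma exists_tendsto_zero_eq_mul_of_isLittleO {𝕜 : Type*} [NormedDivisionRing 𝕜]
    {f g : ι → 𝕜} (h : f =o[l] g) (hfg : ∀ i, g i = 0 → f i = 0) :
    ∃ e : ι → 𝕜, Tendsto e l (𝓝 0) ∧ ∀ i, f i = e i * g i :=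
  ⟨fun i => f i / g i, h.tendsto_div_nhds_zero, fun i => by
    by_cases hg : g i = 0
    · simp [hg, hfg i hg]
    · rw [div_mul_cancel₀ _ hg]⟩

lemma isLittleO_of_abs_le_of_tendsto_zero {f g δ : ι → ℝ} {C : ℝ} (hδ : Tendsto δ l (𝓝 0))
    (h : ∀ᶠ i in l, |f i| ≤ C * (|δ i| * |g i|)) : f =o[l] g := by
  have hδg : (fun i => δ i * g i) =o[l] g := by
    simpa using ((isLittleO_one_iff ℝ).2 hδ).mul_isBigO (isBigO_refl g l)
  exact (IsBigO.of_bound C (by simpa [abs_mul] using h)).trans_isLittleO hδg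

variable {a b : ι → ℝ}

lemma isLittleO_hellSq_sub_bernChiSq (ha : ∀ i, a i ∈ Set.Icc 0 1)
    (hb : ∀ i, b i ∈ Set.Ioo 0 1)
    (hδ : Tendsto (fun i => (a i - b i) / (b i * (1 - b i))) l (𝓝 0)) :
    (fun i => hellSq (a i) (b i) - bernChiSq (a i) (b i) / 8) =o[l]
      fun i => bernChiSq (a i) (b i) :=
  isLittleO_of_abs_le_of_tendsto_zero (C := 1 / 2) hδ <| .of_forall fun i => by
    rw [abs_of_nonneg (bernChiSq_nonneg (Set.Ioo_subset_Icc_self (hb i)))]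
    linarith [abs_hellSq_sub_bernChiSq_le (ha i) (hb i)]

lemma isLittleO_neg_two_mul_log_one_sub_hellSq_sub_bernChiSq (ha : ∀ i, a i ∈ Set.Icc 0 1)
    (hb : ∀ i, b i ∈ Set.Ioo 0 1)
    (hδ : Tendsto (fun i => (a i - b i) / (b i * (1 - b i))) l (𝓝 0)) :
    (fun i => -2 * log (1 - hellSq (a i) (b i)) - bernChiSq (a i) (b i) / 4) =o[l]
      fun i => bernChiSq (a i) (b i) := by
  have hsmall : ∀ᶠ i in l, |(a i - b i) / (b i * (1 - b i))| ≤ 1 / 2 :=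
    ((tendsto_zero_iff_abs_tendsto_zero _).1 hδ).eventually (eventually_le_nhds one_half_pos)
  refine isLittleO_of_abs_le_of_tendsto_zero (C := 2) hδ (hsmall.mono fun i hi => ?_)
  rw [abs_of_nonneg (bernChiSq_nonneg (Set.Ioo_subset_Icc_self (hb i)))]
  exact abs_neg_two_mul_log_one_sub_hellSq_sub_bernChiSq_le (ha i) (hb i) hi

lemma tendsto_div_nhds_zero_of_le {f g : ι → ℝ} {c : ℝ} (hf : Tendsto f l (𝓝 0)) (hc : 0 < c)
    (hg : ∀ i, c ≤ g i) : Tendsto (fun i => f i / g i) l (𝓝 0) := by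
  refine squeeze_zero_norm (fun i => ?_) (by simpa using hf.norm.div_const c)
  rw [norm_div, Real.norm_of_nonneg (hc.le.trans (hg i))]
  exact div_le_div_of_nonneg_left (norm_nonneg _) hc (hg i)

lemma isBigO_bernChiSq_sq_sqrt_sub {c : ℝ} (ha : ∀ i, 0 ≤ a i) (hb : ∀ i, b i ∈ Set.Ioo 0 1)
    (hc : 0 < c) (hbc : ∀ i, b i ≤ 1 - c) (hab : ∀ᶠ i in l, a i ≤ 2 * b i) :
    (fun i => bernChiSq (a i) (b i)) =O[l] fun i => (√(a i) - √(b i)) ^ 2 := by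
  refine IsBigO.of_bound (6 / c) (hab.mono fun i hi => ?_)
  rw [Real.norm_of_nonneg (bernChiSq_nonneg (Set.Ioo_subset_Icc_self (hb i))),
    Real.norm_of_nonneg (sq_nonneg _)]
  calc _ ≤ 6 / (1 - b i) * _ := bernChiSq_le_mul_sq_sqrt_sub (ha i) hi (hb i)
    _ ≤ 6 / c * _ := by gcongr; linarith [hbc i]

lemma exists_one_sub_hellSq_eq (ha : ∀ i, a i ∈ Set.Icc 0 1) (hb : ∀ i, b i ∈ Set.Ioo 0 1)
    (hδ : Tendsto (fun i => (a i - b i) / (b i * (1 - b i))) l (𝓝 0)) :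
    ∃ e : ι → ℝ, Tendsto e l (𝓝 0) ∧ ∀ i, 1 - hellSq (a i) (b i) =
      1 - (a i - b i) ^ 2 / (8 * b i * (1 - b i)) +
        e i * ((a i - b i) ^ 2 / (b i * (1 - b i))) := by
  obtain ⟨e, he, hfe⟩ := exists_tendsto_zero_eq_mul_of_isLittleO
    (isLittleO_hellSq_sub_bernChiSq ha hb hδ).neg_left fun i hi => by
      have hab : a i = b i := by
        simpa [bernChiSq, sub_eq_zero, (hb i).1.ne', (sub_pos.2 (hb i).2).ne'] using hi
      simp [hab, hellSq_self, bernChiSq]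
  refine ⟨e, he, fun i => ?_⟩
  have hχ8 : bernChiSq (a i) (b i) / 8 = (a i - b i) ^ 2 / (8 * b i * (1 - b i)) := by
    rw [bernChiSq, div_div, mul_comm _ (8 : ℝ), mul_assoc]
  rw [show (a i - b i) ^ 2 / (b i * (1 - b i)) = bernChiSq (a i) (b i) from rfl]
  linear_combination hfe i - hχ8

lemma exists_neg_two_mul_log_one_sub_hellSq_eq (ha : ∀ i, a i ∈ Set.Icc 0 1)
    (hb : ∀ i, b i ∈ Set.Ioo 0 1) (hδ : Tendsto (fun i => (a i - b i) / (b i * (1 - b i))) l (𝓝 0))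
    (hχ : (fun i => bernChiSq (a i) (b i)) =O[l] fun i => (√(a i) - √(b i)) ^ 2) :
    ∃ e : ι → ℝ, Tendsto e l (𝓝 0) ∧ ∀ i, -2 * log (1 - hellSq (a i) (b i)) =
      (√(a i) - √(b i)) ^ 2 * ((√(a i) + √(b i)) ^ 2 / (4 * b i * (1 - b i)) + e i) := by
  obtain ⟨e, he, hfe⟩ := exists_tendsto_zero_eq_mul_of_isLittleO
    ((isLittleO_neg_two_mul_log_one_sub_hellSq_sub_bernChiSq ha hb hδ).trans_isBigO hχ)
    fun i hi => by
      rw [sq_eq_zero_iff, sub_eq_zero, sqrt_inj (ha i).1 (hb i).1.le] at hi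
      simp [hi, hellSq_self, bernChiSq]
  refine ⟨e, he, fun i => ?_⟩
  have hχ4 : (√(a i) - √(b i)) ^ 2 * ((√(a i) + √(b i)) ^ 2 / (4 * b i * (1 - b i))) =
      bernChiSq (a i) (b i) / 4 := by
    rw [← mul_div_assoc, sq_sqrt_sub_mul_sq_sqrt_add (ha i).1 (hb i).1.le, bernChiSq,
      div_div, mul_comm _ (4 : ℝ), mul_assoc]
  linear_combination hfe i - hχ4

end Asymptotics

end Paper

open Paper

theorem statement19_general
    (α β : ℕ → ℝ)
    (hα : ∀ n, α n ∈ Set.Ioo (0 : ℝ) 1) (hβ : ∀ n, β n ∈ Set.Ioo (0 : ℝ) 1)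
    (c : ℝ) (hc : 0 < c) (hβc : ∀ n, β n ≤ 1 - c)
    (hratio : Tendsto (fun n => (α n - β n) / β n) atTop (nhds 0)) :
    (∃ e : ℕ → ℝ, Tendsto e atTop (nhds 0) ∧ ∀ n,
      -2 * Real.log (1 - hellSq (α n) (β n)) =
        (Real.sqrt (α n) - Real.sqrt (β n)) ^ 2 *
          ((Real.sqrt (α n) + Real.sqrt (β n)) ^ 2 / (4 * β n * (1 - β n)) + e n))
    ∧
    (∃ e' : ℕ → ℝ, Tendsto e' atTop (nhds 0) ∧ ∀ n,
      1 - hellSq (α n) (β n) =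
        1 - (α n - β n) ^ 2 / (8 * β n * (1 - β n))
          + e' n * ((α n - β n) ^ 2 / (β n * (1 - β n)))) := by
  have hα' : ∀ n, α n ∈ Set.Icc 0 1 := fun n => Set.Ioo_subset_Icc_self (hα n)
  have hδ : Tendsto (fun n => (α n - β n) / (β n * (1 - β n))) atTop (𝓝 0) := by
    simpa only [div_div] using
      tendsto_div_nhds_zero_of_le hratio hc fun n => show c ≤ 1 - β n by linarith [hβc n]
  have hα2β : ∀ᶠ n in atTop, α n ≤ 2 * β n :=
    (hratio.eventually (eventually_le_nhds one_pos)).mono fun n hn => by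
      rw [div_le_one (hβ n).1] at hn
      linarith
  have hχ := isBigO_bernChiSq_sq_sqrt_sub (fun n => (hα n).1.le) hβ hc hβc hα2β
  exact ⟨exists_neg_two_mul_log_one_sub_hellSq_eq hα' hβ hδ hχ,
    exists_one_sub_hellSq_eq hα' hβ hδ⟩

/-- Remark on `I_s`: if `β_n ≤ α_n`, `β_n ≤ 1 − c`, and
`(α_n − β_n)/β_n → 0`, then
`−2·log(1 − d_H(α_n, β_n)²) = (√α_n − √β_n)²·((√α_n + √β_n)²/(4β_n(1−β_n)) + o(1))`;
in particular,
`1 − d_H(α_n, β_n)² = 1 − (α_n − β_n)²/(8β_n(1−β_n)) + o((α_n − β_n)²/(β_n(1−β_n)))`. -/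
theorem statement19
    (α β : ℕ → ℝ)
    (hα : ∀ n, α n ∈ Set.Ioo (0 : ℝ) 1) (hβ : ∀ n, β n ∈ Set.Ioo (0 : ℝ) 1)
    (hβα : ∀ n, β n ≤ α n)
    (c : ℝ) (hc : 0 < c) (hβc : ∀ n, β n ≤ 1 - c)
    (hratio : Tendsto (fun n => (α n - β n) / β n) atTop (nhds 0)) :
    (∃ e : ℕ → ℝ, Tendsto e atTop (nhds 0) ∧ ∀ n,
      -2 * Real.log (1 - hellSq (α n) (β n)) =
        (Real.sqrt (α n) - Real.sqrt (β n)) ^ 2 *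
          ((Real.sqrt (α n) + Real.sqrt (β n)) ^ 2 / (4 * β n * (1 - β n)) + e n))
    ∧
    (∃ e' : ℕ → ℝ, Tendsto e' atTop (nhds 0) ∧ ∀ n,
      1 - hellSq (α n) (β n) =
        1 - (α n - β n) ^ 2 / (8 * β n * (1 - β n))
          + e' n * ((α n - β n) ^ 2 / (β n * (1 - β n)))) :=
  statement19_general α β hα hβ c hc hβc hratio
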